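/- arXiv:math/0401413 — 2 statements merged into one kernel-verified Lean document; each statement's English description precedes it below -/
import Mathlib

section
/- Let α be a complex number with |α| = 1 such that multiplication by α preserves a lattice in ℂ (a rank-2 discrete subgroup spanning ℂ over ℝ). If α ≠ ±1, then α is a primitive k-th root of unity with k ∈ {3, 4, 6}. -/
/-!
Writing `α v₁ = a v₁ + b v₂` and `α v₂ = c v₁ + d v₂` with `a, b, c, d ∈ ℤ`, Cayley–Hamilton makes
`α` a root of `X ^ 2 - t X + n` with `t = a + d`, `n = a d - b c`. As `|α| = 1` and `α ≠ ±1`,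
`α` is not real; the imaginary part of the equation then gives `t = 2 Re α`, and the real part
`n = |α| ^ 2 = 1`. Then `|t| < 2` forces `t ∈ {-1, 0, 1}`, and `X ^ 2 - t X + 1` is the cyclotomic polynomial `Φ₃`, `Φ₄` or `Φ₆`.
-/

open Polynomial

theorem exists_int_quadratic_of_mul_mem_span_pair {R : Type*} [CommRing R] [NoZeroDivisors R]
    {α v w : R} (hv : v ≠ 0) (hαv : α * v ∈ Submodule.span ℤ {v, w})
    (hαw : α * w ∈ Submodule.span ℤ {v, w}) : ∃ t n : ℤ, α ^ 2 - t * α + n = 0 := by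
  obtain ⟨a, b, hab⟩ := Submodule.mem_span_pair.mp hαv
  obtain ⟨c, d, hcd⟩ := Submodule.mem_span_pair.mp hαw
  simp only [zsmul_eq_mul] at hab hcd
  -- `X ^ 2 - (a + d) X + (a d - b c)` is the characteristic polynomial of `!![a, b; c, d]`
  refine ⟨a + d, a * d - b * c, (mul_eq_zero.mp ?_).resolve_right hv⟩
  push_cast
  linear_combination ((d : R) - α) * hab - (b : R) * hcd

theorem Polynomial.cyclotomic_four (R : Type*) [CommRing R] : cyclotomic 4 R = X ^ 2 + 1 := by
  rw [show 4 = 2 ^ (1 + 1) by rfl, cyclotomic_prime_pow_eq_geom_sum Nat.prime_two]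
  simp [Finset.sum_range_succ, add_comm]

theorem exists_isPrimitiveRoot_of_sq_sub_mul_add_one {R : Type*} [CommRing R] [IsDomain R]
    [CharZero R] {α : R} {t : ℤ} (ht : |t| < 2) (h : α ^ 2 - t * α + 1 = 0) :
    ∃ k ∈ ({3, 4, 6} : Set ℕ), IsPrimitiveRoot α k := by
  have hroot {k : ℕ} (hk : 0 < k) (hcyc : cyclotomic k R = X ^ 2 - C (t : R) * X + 1) :
      IsPrimitiveRoot α k := by
    rw [← isRoot_cyclotomic_iff_charZero hk, hcyc]
    simpa using h
  obtain rfl | rfl | rfl : t = -1 ∨ t = 0 ∨ t = 1 := by rw [abs_lt] at ht; omega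
  · exact ⟨3, by simp, hroot (by norm_num) (by simp [cyclotomic_three])⟩
  · exact ⟨4, by simp, hroot (by norm_num) (by simp [cyclotomic_four])⟩
  · exact ⟨6, by simp, hroot (by norm_num) (by simp [cyclotomic_six])⟩

namespace Complex

theorem re_sq_add_im_sq_of_norm_eq_one {α : ℂ} (habs : ‖α‖ = 1) : α.re ^ 2 + α.im ^ 2 = 1 := by
  have h := sq_norm_sub_sq_re α
  rw [habs, one_pow] at h
  linarith

theorem im_ne_zero_of_norm_eq_one {α : ℂ} (habs : ‖α‖ = 1) (h1 : α ≠ 1) (h2 : α ≠ -1) :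
    α.im ≠ 0 := by
  intro him
  have hα : α = α.re := ext rfl (by simpa using him)
  rw [hα, norm_real, Real.norm_eq_abs, abs_eq zero_le_one] at habs
  rcases habs with h | h
  · exact h1 (hα.trans (by simp [h]))
  · exact h2 (hα.trans (by simp [h]))

theorem abs_re_lt_one_of_norm_eq_one {α : ℂ} (habs : ‖α‖ = 1) (him : α.im ≠ 0) : |α.re| < 1 := by
  have hsq := re_sq_add_im_sq_of_norm_eq_one habs
  have : 0 < α.im ^ 2 := by positivity
  rw [abs_lt]; constructor <;> nlinarith

theorem eq_two_re_and_eq_one_of_sq_sub_mul_add_eq_zero {α : ℂ} {t n : ℝ} (habs : ‖α‖ = 1)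
    (him : α.im ≠ 0) (h : α ^ 2 - t * α + n = 0) : t = 2 * α.re ∧ n = 1 := by
  have hre := congrArg re h
  have him' := congrArg im h
  simp only [pow_two, add_re, sub_re, mul_re, ofReal_re, ofReal_im, add_im, sub_im, mul_im,
    zero_re, zero_im] at hre him'
  have ht : t = 2 * α.re := mul_right_cancel₀ him (by linarith)
  refine ⟨ht, ?_⟩
  subst ht
  linarith [re_sq_add_im_sq_of_norm_eq_one habs]

end Complex

/-- If `α ∈ ℂ` with `|α| = 1` preserves a lattice `ℤv₁ + ℤv₂` (with `v₁, v₂`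
linearly independent over `ℝ`) under multiplication, and `α ≠ ±1`, then `α` is
a primitive `k`-th root of unity with `k ∈ {3, 4, 6}`. -/
theorem stmt_10 (α : ℂ) (habs : ‖α‖ = 1) (v₁ v₂ : ℂ)
    (hind : LinearIndependent ℝ ![v₁, v₂])
    (hpres : ∀ z ∈ Submodule.span ℤ ({v₁, v₂} : Set ℂ),
      α * z ∈ Submodule.span ℤ ({v₁, v₂} : Set ℂ))
    (h1 : α ≠ 1) (h2 : α ≠ -1) :
    ∃ k ∈ ({3, 4, 6} : Set ℕ), IsPrimitiveRoot α k := by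
  obtain ⟨t, n, hquad⟩ := exists_int_quadratic_of_mul_mem_span_pair (by simpa using hind.ne_zero 0)
    (hpres v₁ (Submodule.subset_span (by simp))) (hpres v₂ (Submodule.subset_span (by simp)))
  have him := Complex.im_ne_zero_of_norm_eq_one habs h1 h2
  obtain ⟨ht, hn⟩ := Complex.eq_two_re_and_eq_one_of_sq_sub_mul_add_eq_zero habs him
    (t := t) (n := n) (by exact_mod_cast hquad)
  obtain rfl : n = 1 := by exact_mod_cast hn
  have ht2 : |t| < 2 := by
    have hre := Complex.abs_re_lt_one_of_norm_eq_one habs him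
    have : |(t : ℝ)| < 2 := by rw [ht, abs_mul, abs_two]; linarith
    exact_mod_cast this
  exact exists_isPrimitiveRoot_of_sq_sub_mul_add_one ht2 (by exact_mod_cast hquad)
end

section
/- Let 𝔤 be the 4-dimensional real Lie algebra with basis X₁, X₂, X₃, X₄ and nonzero brackets [X₄,X₁] = -X₂, [X₄,X₂] = X₁. Let J be the linear map with JX₁ = X₂, JX₂ = -X₁, JX₃ = X₄, JX₄ = -X₃. Then J² = -id and the Nijenhuis tensor N(X,Y) = [JX,JY] - J[JX,Y] - J[X,JY] - [X,Y] vanishes for all X, Y ∈ 𝔤. -/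
/-- The bracket of the 4-dimensional solvable Lie algebra with basis
`X₁, X₂, X₃, X₄` (coordinates `0,1,2,3`) and nonzero brackets
`[X₄,X₁] = -X₂`, `[X₄,X₂] = X₁` (all other basis brackets vanish),
extended bilinearly. -/
def br15 (x y : Fin 4 → ℝ) : Fin 4 → ℝ :=
  ![x 3 * y 1 - x 1 * y 3, -(x 3 * y 0 - x 0 * y 3), 0, 0]

/-- The almost complex structure with `JX₁ = X₂`, `JX₂ = -X₁`, `JX₃ = X₄`,
`JX₄ = -X₃`, extended linearly. -/
def J15 (x : Fin 4 → ℝ) : Fin 4 → ℝ := ![-(x 1), x 0, -(x 3), x 2]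

def nijenhuis {V : Type*} [AddCommGroup V] (bracket : V → V → V) (J : V → V) (x y : V) : V :=
  bracket (J x) (J y) - J (bracket (J x) y) - J (bracket x (J y)) - bracket x y

theorem J15_J15 (x : Fin 4 → ℝ) : J15 (J15 x) = -x := by
  funext i
  fin_cases i <;> simp [J15]

theorem nijenhuis_br15_J15 (x y : Fin 4 → ℝ) : nijenhuis br15 J15 x y = 0 := by
  funext i
  fin_cases i <;> simp [nijenhuis, J15, br15] <;> ring

/-- On the solvable Lie algebra of hyperelliptic surfaces (`[X₄,X₁] = -X₂`,
`[X₄,X₂] = X₁`, all other brackets zero), the map `J` with `JX₁ = X₂`,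
`JX₂ = -X₁`, `JX₃ = X₄`, `JX₄ = -X₃` satisfies `J² = -id` and its Nijenhuis
tensor `N(X,Y) = [JX,JY] - J[JX,Y] - J[X,JY] - [X,Y]` vanishes. -/
theorem stmt_15 :
    (∀ x : Fin 4 → ℝ, J15 (J15 x) = -x) ∧
    (∀ x y : Fin 4 → ℝ,
      br15 (J15 x) (J15 y) - J15 (br15 (J15 x) y) - J15 (br15 x (J15 y)) - br15 x y = 0) :=
  ⟨J15_J15, nijenhuis_br15_J15⟩
end
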